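/- The Fibonomial coefficient [n choose k]_F = F_n!/(F_k! · F_{n-k}!), where F_n! = F_n·F_{n-1}···F_1 with F_n the Fibonacci numbers (F_1 = F_2 = 1), is a natural number for all 0 ≤ k ≤ n. -/
import Mathlib


/-- Fibonacci factorial F_n! = F_n F_{n-1} ⋯ F_1. -/
def fibFact : ℕ → ℕ
  | 0 => 1
  | n + 1 => Nat.fib (n + 1) * fibFact n

/-- Fibonomial coefficient defined recursively. -/
def fibinom : ℕ → ℕ → ℕ
  | _, 0 => 1
  | 0, _ + 1 => 0
  | n + 1, k + 1 =>
      Nat.fib (n - k + 1) * fibinom n k + Nat.fib k * fibinom n (k + 1)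

lemma fibinom_eq_zero : ∀ n k : ℕ, n < k → fibinom n k = 0
  | _, 0, h => absurd h (Nat.not_lt_zero _)
  | 0, k + 1, _ => rfl
  | n + 1, k + 1, h => by
      have hk : n < k := Nat.lt_of_succ_lt_succ h
      simp [fibinom, fibinom_eq_zero n k hk,
        fibinom_eq_zero n (k + 1) (Nat.lt_succ_of_lt hk)]

lemma fibinom_spec : ∀ n k : ℕ, k ≤ n →
    fibinom n k * (fibFact k * fibFact (n - k)) = fibFact n
  | n, 0, _ => by simp [fibinom.eq_def, fibFact]
  | 0, k + 1, h => absurd h (by omega)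
  | n + 1, k + 1, h => by
      have hk : k ≤ n := Nat.lt_succ_iff.mp h
      rcases Nat.lt_or_ge k n with hlt | hge
      · -- k + 1 ≤ n
        have h1 := fibinom_spec n k hk
        have h2 := fibinom_spec n (k + 1) hlt
        have hnk : n - k = (n - (k + 1)) + 1 := by omega
        have hadd : Nat.fib (n + 1) =
            Nat.fib k * Nat.fib (n - k) + Nat.fib (k + 1) * Nat.fib (n - k + 1) := by
          have := Nat.fib_add k (n - k)
          rw [show k + (n - k) + 1 = n + 1 by omega] at this
          exact this
        show (Nat.fib (n - k + 1) * fibinom n k + Nat.fib k * fibinom n (k + 1)) *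
            (fibFact (k + 1) * fibFact (n + 1 - k - 1)) = fibFact (n + 1)
        rw [show n + 1 - k - 1 = n - k from by omega]
        calc (Nat.fib (n - k + 1) * fibinom n k + Nat.fib k * fibinom n (k + 1)) *
              (fibFact (k + 1) * fibFact (n - k))
            = Nat.fib (n - k + 1) * Nat.fib (k + 1) *
                (fibinom n k * (fibFact k * fibFact (n - k)))
              + Nat.fib k * Nat.fib (n - k) *
                (fibinom n (k + 1) * (fibFact (k + 1) * fibFact (n - (k + 1)))) := by
              rw [hnk]; simp only [fibFact]
              rw [show n - (k + 1) + 1 = n - k from by omega]; ring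
          _ = (Nat.fib k * Nat.fib (n - k) + Nat.fib (k + 1) * Nat.fib (n - k + 1)) *
                fibFact n := by rw [h1, h2]; ring
          _ = fibFact (n + 1) := by rw [← hadd]; simp [fibFact]
      · -- k = n
        have hkn : k = n := le_antisymm hk hge
        subst hkn
        have h1 := fibinom_spec k k le_rfl
        show (Nat.fib (k - k + 1) * fibinom k k + Nat.fib k * fibinom k (k + 1)) *
            (fibFact (k + 1) * fibFact (k + 1 - (k + 1))) = fibFact (k + 1)
        rw [fibinom_eq_zero k (k + 1) (Nat.lt_succ_self k)]
        simp only [Nat.sub_self, Nat.fib_one, fibFact, mul_zero, add_zero, one_mul, mul_one]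
        simp only [Nat.sub_self, fibFact, mul_one] at h1
        rw [show Nat.fib (0 + 1) * fibinom k k * (Nat.fib (k + 1) * fibFact k) =
          Nat.fib (0 + 1) * Nat.fib (k + 1) * (fibinom k k * fibFact k) from by ring, h1]
        simp

/-- The Fibonomial coefficient is a natural number: F_k!·F_{n-k}! divides F_n!. -/
theorem fibonomial_is_nat (n k : ℕ) (h : k ≤ n) :
    fibFact k * fibFact (n - k) ∣ fibFact n :=
  ⟨fibinom n k, by rw [← fibinom_spec n k h]; ring⟩
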